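/- arXiv:2602.03839 — 4 statements merged into one kernel-verified Lean document; each statement's English description precedes it below -/
import Mathlib

section
/- Let 0 < β₁ < β₂ < 1, t ≥ 1 an integer, and g₁,…,gₜ arbitrary reals. With pᵢ = (1-β₁)β₁^{t-i}/(1-β₁ᵗ), qᵢ = (1-β₂)β₂^{t-i}/(1-β₂ᵗ), m̂ₜ = ∑_{i=1}^t pᵢ gᵢ, v̂ₜ = ∑_{i=1}^t qᵢ gᵢ², and cₜ = ((1-β₂)/(1-β₁))·((1-β₁ᵗ)/(1-β₂ᵗ)): one has v̂ₜ ≥ cₜ · m̂ₜ². -/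
/-- Adam's bias-corrected second moment is bounded below by `cₜ` times the
square of the bias-corrected first moment. -/
theorem adam_second_moment_lower_bound
    (β₁ β₂ : ℝ) (hβ₁ : 0 < β₁) (hβ₁₂ : β₁ < β₂) (hβ₂ : β₂ < 1)
    (t : ℕ) (ht : 1 ≤ t) (g : ℕ → ℝ)
    (p q : ℕ → ℝ)
    (hp : ∀ i, p i = (1 - β₁) * β₁ ^ (t - i) / (1 - β₁ ^ t))
    (hq : ∀ i, q i = (1 - β₂) * β₂ ^ (t - i) / (1 - β₂ ^ t))
    (m v : ℝ)
    (hm : m = ∑ i ∈ Finset.Icc 1 t, p i * g i)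
    (hv : v = ∑ i ∈ Finset.Icc 1 t, q i * g i ^ 2)
    (c : ℝ)
    (hc : c = ((1 - β₂) / (1 - β₁)) * ((1 - β₁ ^ t) / (1 - β₂ ^ t))) :
    v ≥ c * m ^ 2 := by
  have hβ₂0 : (0:ℝ) < β₂ := hβ₁.trans hβ₁₂
  have hβ₁1 : β₁ < 1 := hβ₁₂.trans hβ₂
  have hA : (0:ℝ) < 1 - β₁ ^ t := by
    have := pow_lt_one₀ hβ₁.le hβ₁1 (show t ≠ 0 by omega)
    linarith
  have hB : (0:ℝ) < 1 - β₂ ^ t := by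
    have := pow_lt_one₀ hβ₂0.le hβ₂ (show t ≠ 0 by omega)
    linarith
  have h1β₁ : (0:ℝ) < 1 - β₁ := by linarith
  have h1β₂ : (0:ℝ) < 1 - β₂ := by linarith
  have hp0 : ∀ i, 0 ≤ p i := by
    intro i
    rw [hp i]
    exact div_nonneg (mul_nonneg h1β₁.le (pow_nonneg hβ₁.le _)) hA.le
  have hc0 : 0 ≤ c := by
    rw [hc]
    exact mul_nonneg (div_nonneg h1β₂.le h1β₁.le) (div_nonneg hA.le hB.le)
  -- ∑ p = 1
  have hsum : ∑ i ∈ Finset.Icc 1 t, p i = 1 := by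
    have h1 : ∑ i ∈ Finset.Icc 1 t, β₁ ^ (t - i) = ∑ i ∈ Finset.range t, β₁ ^ i := by
      rw [← Finset.Ico_add_one_right_eq_Icc, Finset.sum_Ico_eq_sum_range]
      norm_num
      rw [← Finset.sum_range_reflect]
      apply Finset.sum_congr rfl
      intro i hi
      have := Finset.mem_range.mp hi
      congr 1
      omega
    have h2 : ∑ i ∈ Finset.range t, β₁ ^ i = (1 - β₁ ^ t) / (1 - β₁) := by
      rw [geom_sum_eq (by linarith)]
      rw [div_eq_div_iff (by linarith) (by linarith)]
      ring
    simp only [hp]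
    rw [← Finset.sum_div, ← Finset.mul_sum, h1, h2]
    field_simp
  -- Cauchy-Schwarz: m² ≤ ∑ p g²
  have hCS : m ^ 2 ≤ ∑ i ∈ Finset.Icc 1 t, p i * g i ^ 2 := by
    have h := Finset.sum_mul_sq_le_sq_mul_sq (Finset.Icc 1 t)
      (fun i => Real.sqrt (p i)) (fun i => Real.sqrt (p i) * g i)
    have e1 : ∀ i ∈ Finset.Icc 1 t,
        Real.sqrt (p i) * (Real.sqrt (p i) * g i) = p i * g i := by
      intro i _
      rw [← mul_assoc, Real.mul_self_sqrt (hp0 i)]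
    have e2 : ∀ i ∈ Finset.Icc 1 t, Real.sqrt (p i) ^ 2 = p i := by
      intro i _; exact Real.sq_sqrt (hp0 i)
    have e3 : ∀ i ∈ Finset.Icc 1 t,
        (Real.sqrt (p i) * g i) ^ 2 = p i * g i ^ 2 := by
      intro i _
      rw [mul_pow, Real.sq_sqrt (hp0 i)]
    rw [Finset.sum_congr rfl e1, Finset.sum_congr rfl e2, Finset.sum_congr rfl e3,
      hsum, one_mul] at h
    rw [hm]
    exact h
  -- pointwise: c * p i ≤ q i for i ∈ Icc 1 t
  have hpt : ∀ i ∈ Finset.Icc 1 t, c * p i ≤ q i := by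
    intro i hi
    rw [hc, hp, hq]
    have hA' : (1 - β₁ ^ t) ≠ 0 := ne_of_gt hA
    have hB' : (1 - β₂ ^ t) ≠ 0 := ne_of_gt hB
    have h1' : (1 - β₁) ≠ 0 := ne_of_gt h1β₁
    have hcp : (1 - β₂) / (1 - β₁) * ((1 - β₁ ^ t) / (1 - β₂ ^ t)) *
        ((1 - β₁) * β₁ ^ (t - i) / (1 - β₁ ^ t))
        = (1 - β₂) * β₁ ^ (t - i) / (1 - β₂ ^ t) := by
      field_simp
    rw [hcp]
    gcongr
  -- combine
  have h2 : c * m ^ 2 ≤ c * ∑ i ∈ Finset.Icc 1 t, p i * g i ^ 2 :=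
    mul_le_mul_of_nonneg_left hCS hc0
  have h3 : c * ∑ i ∈ Finset.Icc 1 t, p i * g i ^ 2 ≤ v := by
    rw [hv, Finset.mul_sum]
    apply Finset.sum_le_sum
    intro i hi
    have := hpt i hi
    nlinarith [sq_nonneg (g i)]
  linarith
end

section
/- (Adam Update Upper Bound.) Let 0 < β₁ < β₂ < 1, η > 0, ε ≥ 0, t ≥ 1 an integer, and g₁,…,gₜ arbitrary reals. Define pᵢ = (1-β₁)β₁^{t-i}/(1-β₁ᵗ), qᵢ = (1-β₂)β₂^{t-i}/(1-β₂ᵗ), m̂ₜ = ∑_{i=1}^t pᵢ gᵢ, v̂ₜ = ∑_{i=1}^t qᵢ gᵢ², and the Adam update Δwₜ = η · m̂ₜ/(√v̂ₜ + ε) (with the convention Δwₜ = 0 when v̂ₜ = 0 and ε = 0). Then |Δwₜ| ≤ η · √( ((1-β₁)/(1-β₂)) · ((1-β₂ᵗ)/(1-β₁ᵗ)) ). -/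
/-- Adam Update Upper Bound: the per-step Adam update magnitude satisfies
`|Δwₜ| ≤ η·√(((1-β₁)/(1-β₂))·((1-β₂ᵗ)/(1-β₁ᵗ)))`. -/
theorem adam_update_upper_bound
    (β₁ β₂ : ℝ) (hβ₁ : 0 < β₁) (hβ₁₂ : β₁ < β₂) (hβ₂ : β₂ < 1)
    (η ε : ℝ) (hη : 0 < η) (hε : 0 ≤ ε)
    (t : ℕ) (ht : 1 ≤ t) (g : ℕ → ℝ)
    (p q : ℕ → ℝ)
    (hp : ∀ i, p i = (1 - β₁) * β₁ ^ (t - i) / (1 - β₁ ^ t))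
    (hq : ∀ i, q i = (1 - β₂) * β₂ ^ (t - i) / (1 - β₂ ^ t))
    (m v Δw : ℝ)
    (hm : m = ∑ i ∈ Finset.Icc 1 t, p i * g i)
    (hv : v = ∑ i ∈ Finset.Icc 1 t, q i * g i ^ 2)
    (hΔw : Δw = if Real.sqrt v + ε = 0 then 0 else η * m / (Real.sqrt v + ε)) :
    |Δw| ≤ η * Real.sqrt (((1 - β₁) / (1 - β₂)) * ((1 - β₂ ^ t) / (1 - β₁ ^ t))) := by
  have hβ₂0 : (0:ℝ) < β₂ := hβ₁.trans hβ₁₂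
  have hβ₁1 : β₁ < 1 := hβ₁₂.trans hβ₂
  have h1β₁ : (0:ℝ) < 1 - β₁ := by linarith
  have h1β₂ : (0:ℝ) < 1 - β₂ := by linarith
  have hβ₁t : β₁ ^ t < 1 := pow_lt_one₀ hβ₁.le hβ₁1 (by omega)
  have hβ₂t : β₂ ^ t < 1 := pow_lt_one₀ hβ₂0.le hβ₂ (by omega)
  have h1β₁t : (0:ℝ) < 1 - β₁ ^ t := by linarith
  have h1β₂t : (0:ℝ) < 1 - β₂ ^ t := by linarith
  set C : ℝ := ((1 - β₁) / (1 - β₂)) * ((1 - β₂ ^ t) / (1 - β₁ ^ t)) with hCdef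
  have hCpos : 0 < C := by positivity
  have hqpos : ∀ i, 0 < q i := fun i => by rw [hq]; positivity
  have hv0 : 0 ≤ v := by
    rw [hv]
    exact Finset.sum_nonneg fun i _ => mul_nonneg (hqpos i).le (sq_nonneg _)
  -- Cauchy-Schwarz
  have hm2 : m ^ 2 ≤ (∑ i ∈ Finset.Icc 1 t, p i ^ 2 / q i) * v := by
    rw [hm, hv]
    have h := Finset.sum_mul_sq_le_sq_mul_sq (Finset.Icc 1 t)
      (fun i => p i / Real.sqrt (q i)) (fun i => Real.sqrt (q i) * g i)
    have e1 : ∀ i ∈ Finset.Icc 1 t,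
        (p i / Real.sqrt (q i)) * (Real.sqrt (q i) * g i) = p i * g i := by
      intro i _
      have : Real.sqrt (q i) ≠ 0 := ne_of_gt (Real.sqrt_pos.mpr (hqpos i))
      field_simp
    have e2 : ∀ i ∈ Finset.Icc 1 t,
        (p i / Real.sqrt (q i)) ^ 2 = p i ^ 2 / q i := by
      intro i _
      rw [div_pow, Real.sq_sqrt (hqpos i).le]
    have e3 : ∀ i ∈ Finset.Icc 1 t,
        (Real.sqrt (q i) * g i) ^ 2 = q i * g i ^ 2 := by
      intro i _
      rw [mul_pow, Real.sq_sqrt (hqpos i).le]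
    rw [Finset.sum_congr rfl e1, Finset.sum_congr rfl e2, Finset.sum_congr rfl e3] at h
    exact h
  -- sum bound
  have hsum : (∑ i ∈ Finset.Icc 1 t, p i ^ 2 / q i) ≤ C := by
    set A : ℝ := (1 - β₁) ^ 2 * (1 - β₂ ^ t) / ((1 - β₁ ^ t) ^ 2 * (1 - β₂)) with hAdef
    have hA : 0 < A := by positivity
    have step : ∀ i ∈ Finset.Icc 1 t, p i ^ 2 / q i ≤ A * β₁ ^ (t - i) := by
      intro i _
      have hb2 : (0:ℝ) < β₂ ^ (t - i) := by positivity
      have key : (β₁ ^ 2 / β₂) ^ (t - i) = (β₁ ^ (t - i)) ^ 2 / β₂ ^ (t - i) := by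
        rw [div_pow, ← pow_mul, ← pow_mul, Nat.mul_comm]
      have heq : p i ^ 2 / q i = A * (β₁ ^ 2 / β₂) ^ (t - i) := by
        rw [hp, hq, hAdef, key]
        field_simp
      have hle : (β₁ ^ 2 / β₂) ^ (t - i) ≤ β₁ ^ (t - i) := by
        apply pow_le_pow_left₀ (by positivity)
        rw [div_le_iff₀ hβ₂0]
        nlinarith
      rw [heq]
      exact mul_le_mul_of_nonneg_left hle hA.le
    calc (∑ i ∈ Finset.Icc 1 t, p i ^ 2 / q i)
        ≤ ∑ i ∈ Finset.Icc 1 t, A * β₁ ^ (t - i) := Finset.sum_le_sum step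
      _ = A * ∑ i ∈ Finset.Icc 1 t, β₁ ^ (t - i) := by rw [Finset.mul_sum]
      _ = A * ∑ k ∈ Finset.range t, β₁ ^ k := by
          congr 1
          refine Finset.sum_nbij' (fun i => t - i) (fun k => t - k) ?_ ?_ ?_ ?_ ?_
          · intro i hi; simp at hi ⊢; omega
          · intro k hk; simp at hk ⊢; omega
          · intro i hi; simp at hi ⊢; omega
          · intro k hk; simp at hk ⊢; omega
          · intro i _; rfl
      _ = A * ((1 - β₁ ^ t) / (1 - β₁)) := by
          rw [geom_sum_eq (by linarith : β₁ ≠ 1)]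
          congr 1
          rw [div_eq_div_iff (by linarith) (by linarith)]
          ring
      _ = C := by
          rw [hAdef, hCdef]
          field_simp
  have hmC : |m| ≤ Real.sqrt C * Real.sqrt v := by
    have h1 : m ^ 2 ≤ C * v :=
      hm2.trans (mul_le_mul_of_nonneg_right hsum hv0)
    have := Real.sqrt_le_sqrt h1
    rwa [Real.sqrt_sq_eq_abs, Real.sqrt_mul hCpos.le] at this
  rw [hΔw]
  split_ifs with h
  · simp only [abs_zero]
    positivity
  · have hd : 0 < Real.sqrt v + ε := by
      rcases lt_or_eq_of_le (by positivity : (0:ℝ) ≤ Real.sqrt v + ε) with h' | h'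
      · exact h'
      · exact absurd h'.symm h
    rw [abs_div, abs_mul, abs_of_pos hη, abs_of_pos hd, div_le_iff₀ hd]
    calc η * |m| ≤ η * (Real.sqrt C * Real.sqrt v) :=
          mul_le_mul_of_nonneg_left hmC hη.le
      _ = η * Real.sqrt C * Real.sqrt v := by ring
      _ ≤ η * Real.sqrt C * (Real.sqrt v + ε) :=
          mul_le_mul_of_nonneg_left (by linarith) (by positivity)
end

section
/- (Asymptotic Adam Update Bound.) Let 0 < β₁ < β₂ < 1, η > 0, ε ≥ 0, and for each integer t ≥ 1 and gradients g₁,…,gₜ define m̂ₜ = ∑_{i=1}^t pᵢ gᵢ and v̂ₜ = ∑_{i=1}^t qᵢ gᵢ² with pᵢ = (1-β₁)β₁^{t-i}/(1-β₁ᵗ), qᵢ = (1-β₂)β₂^{t-i}/(1-β₂ᵗ), and Δwₜ = η·m̂ₜ/(√v̂ₜ + ε) (taking Δwₜ = 0 when v̂ₜ = 0 and ε = 0). Then for every t ≥ 1 and every gradient sequence, |Δwₜ| ≤ η·√((1-β₁)/(1-β₂)). -/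
set_option maxHeartbeats 1000000 in
/-- Asymptotic Adam Update Bound: for every step `t ≥ 1` and every gradient
sequence, `|Δwₜ| ≤ η·√((1-β₁)/(1-β₂))`. -/
theorem adam_update_asymptotic_bound
    (β₁ β₂ : ℝ) (hβ₁ : 0 < β₁) (hβ₁₂ : β₁ < β₂) (hβ₂ : β₂ < 1)
    (η ε : ℝ) (hη : 0 < η) (hε : 0 ≤ ε) :
    ∀ (t : ℕ), 1 ≤ t → ∀ (g : ℕ → ℝ) (p q : ℕ → ℝ),
    (∀ i, p i = (1 - β₁) * β₁ ^ (t - i) / (1 - β₁ ^ t)) →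
    (∀ i, q i = (1 - β₂) * β₂ ^ (t - i) / (1 - β₂ ^ t)) →
    ∀ (m v Δw : ℝ),
    m = (∑ i ∈ Finset.Icc 1 t, p i * g i) →
    v = (∑ i ∈ Finset.Icc 1 t, q i * g i ^ 2) →
    Δw = (if Real.sqrt v + ε = 0 then 0 else η * m / (Real.sqrt v + ε)) →
    |Δw| ≤ η * Real.sqrt ((1 - β₁) / (1 - β₂)) := by
  intro t ht g p q hp hq m v Δw hm hv hΔw
  have hb2 : (0:ℝ) < β₂ := lt_trans hβ₁ hβ₁₂
  have hb1lt : β₁ < 1 := lt_trans hβ₁₂ hβ₂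
  have h1β₁ : (0:ℝ) < 1 - β₁ := by linarith
  have h1β₂ : (0:ℝ) < 1 - β₂ := by linarith
  have hb1t : β₁ ^ t < 1 := pow_lt_one₀ hβ₁.le hb1lt (by omega)
  have hb2t : β₂ ^ t < 1 := pow_lt_one₀ hb2.le hβ₂ (by omega)
  have h1β₁t : (0:ℝ) < 1 - β₁ ^ t := by linarith
  have h1β₂t : (0:ℝ) < 1 - β₂ ^ t := by linarith
  set γ : ℝ := β₁ ^ 2 / β₂ with hγ
  have hγpos : 0 < γ := by positivity
  have hγlt : γ < β₁ := by
    rw [hγ, div_lt_iff₀ hb2]; nlinarith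
  have hγlt1 : γ < 1 := lt_trans hγlt hb1lt
  have hγt1 : γ ^ t < 1 := pow_lt_one₀ hγpos.le hγlt1 (by omega)
  set K : ℝ := (1 - β₁) / (1 - β₂) with hK
  have hKpos : 0 < K := by positivity
  -- q is positive
  have hqpos : ∀ i, 0 < q i := fun i => by
    rw [hq]; positivity
  -- Cauchy–Schwarz : m ^ 2 ≤ S * v
  set S : ℝ := ∑ i ∈ Finset.Icc 1 t, p i ^ 2 / q i with hS
  have hCS : m ^ 2 ≤ S * v := by
    have h := Finset.sum_mul_sq_le_sq_mul_sq (Finset.Icc 1 t)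
      (fun i => p i / Real.sqrt (q i)) (fun i => Real.sqrt (q i) * g i)
    have e1 : ∀ i ∈ Finset.Icc 1 t,
        p i / Real.sqrt (q i) * (Real.sqrt (q i) * g i) = p i * g i := by
      intro i _
      have : Real.sqrt (q i) ≠ 0 := ne_of_gt (Real.sqrt_pos.2 (hqpos i))
      field_simp
    have e2 : ∀ i ∈ Finset.Icc 1 t,
        (p i / Real.sqrt (q i)) ^ 2 = p i ^ 2 / q i := by
      intro i _
      rw [div_pow, Real.sq_sqrt (hqpos i).le]
    have e3 : ∀ i ∈ Finset.Icc 1 t,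
        (Real.sqrt (q i) * g i) ^ 2 = q i * g i ^ 2 := by
      intro i _
      rw [mul_pow, Real.sq_sqrt (hqpos i).le]
    rw [Finset.sum_congr rfl e1, Finset.sum_congr rfl e2, Finset.sum_congr rfl e3] at h
    rw [hm, hv, hS]; exact h
  -- compute S
  have hSval : S = ((1-β₁)^2*(1-β₂^t)/((1-β₁^t)^2*(1-β₂))) * ∑ k ∈ Finset.range t, γ ^ k := by
    rw [hS, Finset.mul_sum]
    rw [← Finset.Ico_add_one_right_eq_Icc, Finset.sum_Ico_eq_sum_range]
    have : t + 1 - 1 = t := by omega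
    rw [this]
    rw [← Finset.sum_range_reflect (fun k => ((1-β₁)^2*(1-β₂^t)/((1-β₁^t)^2*(1-β₂))) * γ ^ k) t]
    refine Finset.sum_congr rfl fun k hk => ?_
    rw [hp, hq]
    have he : t - (1 + k) = t - 1 - k := by omega
    rw [he]
    have h3 : (1:ℝ) - β₂ ≠ 0 := ne_of_gt h1β₂
    have h4 : β₂ ^ (t - 1 - k) ≠ 0 := by positivity
    have h5 : (1:ℝ) - β₁ ^ t ≠ 0 := ne_of_gt h1β₁t
    have h6 : (1:ℝ) - β₂ ^ t ≠ 0 := ne_of_gt h1β₂t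
    rw [hγ]
    field_simp
    ring
    rw [inv_pow, mul_assoc, mul_inv_cancel₀ h4, mul_one]
  -- bound S by K
  have hgeom : ∑ k ∈ Finset.range t, γ ^ k ≤ (1 - γ ^ t) / (1 - β₁) := by
    have hne : γ ≠ 1 := ne_of_lt hγlt1
    rw [geom_sum_eq hne]
    have h1 : (γ ^ t - 1) / (γ - 1) = (1 - γ ^ t) / (1 - γ) := by
      rw [div_eq_div_iff (by linarith) (by linarith)]; ring
    rw [h1]
    apply div_le_div_of_nonneg_left _ h1β₁ (by linarith)
    · linarith
  have key : (1 - β₂ ^ t) * (1 - γ ^ t) ≤ (1 - β₁ ^ t) ^ 2 := by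
    have habc : (β₁ ^ t) ^ 2 = β₂ ^ t * γ ^ t := by
      have hb : (β₂:ℝ) ^ t ≠ 0 := by positivity
      rw [hγ, div_pow]
      field_simp
      ring
    have hbpos : 0 < β₂ ^ t := by positivity
    have hcpos : 0 < γ ^ t := by positivity
    have hapos : 0 < β₁ ^ t := by positivity
    nlinarith [sq_nonneg (β₂ ^ t - γ ^ t), sq_nonneg (β₂ ^ t + γ ^ t - 2 * β₁ ^ t)]
  have hfrac : ((1-β₁)^2*(1-β₂^t)/((1-β₁^t)^2*(1-β₂))) * ((1 - γ ^ t) / (1 - β₁))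
      ≤ (1 - β₁) / (1 - β₂) := by
    rw [div_mul_div_comm, div_le_div_iff₀ (by positivity) h1β₂]
    have h2 := mul_le_mul_of_nonneg_left key
      (by positivity : (0:ℝ) ≤ (1-β₁)^2*(1-β₂))
    linarith [h2]
  have hSle : S ≤ K := by
    rw [hSval, hK]
    calc ((1-β₁)^2*(1-β₂^t)/((1-β₁^t)^2*(1-β₂))) * ∑ k ∈ Finset.range t, γ ^ k
        ≤ ((1-β₁)^2*(1-β₂^t)/((1-β₁^t)^2*(1-β₂))) * ((1 - γ ^ t) / (1 - β₁)) :=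
          mul_le_mul_of_nonneg_left hgeom (by positivity)
      _ ≤ (1 - β₁) / (1 - β₂) := hfrac
  -- v nonneg
  have hvnn : 0 ≤ v := by
    rw [hv]; apply Finset.sum_nonneg; intro i _; exact mul_nonneg (hqpos i).le (sq_nonneg _)
  have hmv : |m| ≤ Real.sqrt K * Real.sqrt v := by
    have h1 : m ^ 2 ≤ K * v := le_trans hCS (mul_le_mul_of_nonneg_right hSle hvnn)
    have := Real.sqrt_le_sqrt h1
    rwa [Real.sqrt_sq_eq_abs, Real.sqrt_mul hKpos.le] at this
  rw [hΔw]
  split_ifs with h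
  · simp; positivity
  · have hpos : 0 < Real.sqrt v + ε :=
      lt_of_le_of_ne (by positivity) (Ne.symm h)
    rw [abs_div, abs_mul, abs_of_pos hη, abs_of_pos hpos, div_le_iff₀ hpos]
    calc η * |m| ≤ η * (Real.sqrt K * Real.sqrt v) := by
          exact mul_le_mul_of_nonneg_left hmv hη.le
      _ ≤ η * Real.sqrt K * (Real.sqrt v + ε) := by
          rw [mul_assoc]
          apply mul_le_mul_of_nonneg_left _ hη.le
          apply mul_le_mul_of_nonneg_left _ (Real.sqrt_nonneg K)
          linarith [Real.sqrt_nonneg v]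
end

section
/- (The Adam bound is a supremum, not attained.) Let 0 < β₁ < β₂ < 1 and let t ≥ 2 be an integer. With pᵢ = (1-β₁)β₁^{t-i}/(1-β₁ᵗ), qᵢ = (1-β₂)β₂^{t-i}/(1-β₂ᵗ), cₜ = ((1-β₂)/(1-β₁))·((1-β₁ᵗ)/(1-β₂ᵗ)): for every gradient sequence g₁,…,gₜ with v̂ₜ = ∑_{i=1}^t qᵢ gᵢ² > 0, the strict inequality |∑_{i=1}^t pᵢ gᵢ| / √v̂ₜ < 1/√cₜ holds; i.e., no single gradient history achieves the bound. -/
/-- The Adam bound `1/√cₜ` is a supremum not attained by any single gradient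
history: for `t ≥ 2`, every sequence with `v̂ₜ > 0` satisfies the strict
inequality `|m̂ₜ|/√v̂ₜ < 1/√cₜ`. -/
theorem adam_bound_not_attained
    (β₁ β₂ : ℝ) (hβ₁ : 0 < β₁) (hβ₁₂ : β₁ < β₂) (hβ₂ : β₂ < 1)
    (t : ℕ) (ht : 2 ≤ t)
    (p q : ℕ → ℝ)
    (hp : ∀ i, p i = (1 - β₁) * β₁ ^ (t - i) / (1 - β₁ ^ t))
    (hq : ∀ i, q i = (1 - β₂) * β₂ ^ (t - i) / (1 - β₂ ^ t))
    (c : ℝ)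
    (hc : c = ((1 - β₂) / (1 - β₁)) * ((1 - β₁ ^ t) / (1 - β₂ ^ t))) :
    ∀ (g : ℕ → ℝ) (v : ℝ),
      v = (∑ i ∈ Finset.Icc 1 t, q i * g i ^ 2) → 0 < v →
      |∑ i ∈ Finset.Icc 1 t, p i * g i| / Real.sqrt v < 1 / Real.sqrt c := by
  intro g v hv hvpos
  have hβ₂0 : 0 < β₂ := hβ₁.trans hβ₁₂
  have hβ₁1 : β₁ < 1 := hβ₁₂.trans hβ₂
  have hA : 0 < 1 - β₁ := by linarith
  have hB : 0 < 1 - β₂ := by linarith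
  have htne : t ≠ 0 := by omega
  have hAt : 0 < 1 - β₁ ^ t := by
    have := pow_lt_one₀ hβ₁.le hβ₁1 htne; linarith
  have hBt : 0 < 1 - β₂ ^ t := by
    have := pow_lt_one₀ hβ₂0.le hβ₂ htne; linarith
  have hcpos : 0 < c := by rw [hc]; positivity
  have hqpos : ∀ i, 0 < q i := fun i => by rw [hq]; positivity
  have hppos : ∀ i, 0 < p i := fun i => by rw [hp]; positivity
  -- key identity: p i ^ 2 / q i = (1/c) * (β₁/β₂)^(t-i) * p i
  have hkey : ∀ i, p i ^ 2 / q i = (1 / c) * (β₁ / β₂) ^ (t - i) * p i := by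
    intro i
    rw [hp, hq, hc, div_pow]
    have hβ₂ne : β₂ ≠ 0 := hβ₂0.ne'
    field_simp
    ring_nf
    rw [mul_assoc, ← mul_pow, mul_inv_cancel₀ hβ₂ne, one_pow, mul_one]
  -- sum of p over Icc 1 t is 1
  have hsumgeom : ∀ β : ℝ, β ≠ 1 →
      (∑ i ∈ Finset.Icc 1 t, β ^ (t - i)) = (β ^ t - 1) / (β - 1) := by
    intro β hβ
    rw [← geom_sum_eq hβ t, ← Finset.sum_range_reflect]
    rw [show Finset.Icc 1 t = Finset.Ico 1 (t + 1) by rfl,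
      Finset.sum_Ico_eq_sum_range]
    apply Finset.sum_congr rfl
    intro j hj
    simp only [Finset.mem_range] at hj
    congr 1
    omega
  have hsump : (∑ i ∈ Finset.Icc 1 t, p i) = 1 := by
    have h1 : β₁ ≠ 1 := ne_of_lt hβ₁1
    calc (∑ i ∈ Finset.Icc 1 t, p i)
        = ∑ i ∈ Finset.Icc 1 t, (1 - β₁) / (1 - β₁ ^ t) * β₁ ^ (t - i) := by
          apply Finset.sum_congr rfl; intro i _; rw [hp]; ring
      _ = (1 - β₁) / (1 - β₁ ^ t) * ((β₁ ^ t - 1) / (β₁ - 1)) := by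
          rw [← Finset.mul_sum, hsumgeom β₁ h1]
      _ = 1 := by
          rw [div_mul_div_comm, div_eq_one_iff_eq (by nlinarith)]; ring
  -- S := ∑ p i ^2 / q i < 1 / c
  have hS : (∑ i ∈ Finset.Icc 1 t, p i ^ 2 / q i) < 1 / c := by
    have hlt : (∑ i ∈ Finset.Icc 1 t, p i ^ 2 / q i)
        < ∑ i ∈ Finset.Icc 1 t, (1 / c) * p i := by
      apply Finset.sum_lt_sum
      · intro i hi
        rw [hkey i]
        have hr : (β₁ / β₂) ^ (t - i) ≤ 1 :=
          pow_le_one₀ (by positivity) (by rw [div_le_one hβ₂0]; linarith)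
        have : (1 / c) * (β₁ / β₂) ^ (t - i) ≤ (1 / c) * 1 := by
          apply mul_le_mul_of_nonneg_left hr (by positivity)
        nlinarith [hppos i]
      · refine ⟨1, Finset.mem_Icc.mpr ⟨le_refl 1, by omega⟩, ?_⟩
        rw [hkey 1]
        have hr : (β₁ / β₂) ^ (t - 1) < 1 := by
          apply pow_lt_one₀ (by positivity) (by rw [div_lt_one hβ₂0]; linarith)
          omega
        have : (1 / c) * (β₁ / β₂) ^ (t - 1) < (1 / c) * 1 := by
          apply mul_lt_mul_of_pos_left hr (by positivity)
        nlinarith [hppos 1]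
    calc (∑ i ∈ Finset.Icc 1 t, p i ^ 2 / q i)
        < ∑ i ∈ Finset.Icc 1 t, (1 / c) * p i := hlt
      _ = (1 / c) * ∑ i ∈ Finset.Icc 1 t, p i := by rw [Finset.mul_sum]
      _ = 1 / c := by rw [hsump, mul_one]
  -- Cauchy-Schwarz
  set m := ∑ i ∈ Finset.Icc 1 t, p i * g i with hm
  have hcs : m ^ 2 ≤ (∑ i ∈ Finset.Icc 1 t, p i ^ 2 / q i) * v := by
    have := Finset.sum_mul_sq_le_sq_mul_sq (Finset.Icc 1 t)
      (fun i => p i / Real.sqrt (q i)) (fun i => Real.sqrt (q i) * g i)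
    have e1 : ∀ i ∈ Finset.Icc 1 t,
        p i / Real.sqrt (q i) * (Real.sqrt (q i) * g i) = p i * g i := by
      intro i _
      have hs : Real.sqrt (q i) ≠ 0 := by
        exact ne_of_gt (Real.sqrt_pos.mpr (hqpos i))
      field_simp
    have e2 : ∀ i ∈ Finset.Icc 1 t,
        (p i / Real.sqrt (q i)) ^ 2 = p i ^ 2 / q i := by
      intro i _
      rw [div_pow, Real.sq_sqrt (hqpos i).le]
    have e3 : ∀ i ∈ Finset.Icc 1 t,
        (Real.sqrt (q i) * g i) ^ 2 = q i * g i ^ 2 := by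
      intro i _
      rw [mul_pow, Real.sq_sqrt (hqpos i).le]
    rw [Finset.sum_congr rfl e1, Finset.sum_congr rfl e2,
      Finset.sum_congr rfl e3] at this
    rw [hv]
    exact this
  have hm2 : m ^ 2 < (1 / c) * v := by
    calc m ^ 2 ≤ (∑ i ∈ Finset.Icc 1 t, p i ^ 2 / q i) * v := hcs
      _ < (1 / c) * v := by
          apply mul_lt_mul_of_pos_right hS hvpos
  have habs : |m| < Real.sqrt ((1 / c) * v) := by
    have := Real.sqrt_lt_sqrt (sq_nonneg m) hm2
    rwa [Real.sqrt_sq_eq_abs] at this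
  have hsv : 0 < Real.sqrt v := Real.sqrt_pos.mpr hvpos
  rw [div_lt_div_iff₀ hsv (Real.sqrt_pos.mpr hcpos)]
  calc |m| * Real.sqrt c < Real.sqrt ((1 / c) * v) * Real.sqrt c := by
        apply mul_lt_mul_of_pos_right habs (Real.sqrt_pos.mpr hcpos)
    _ = Real.sqrt ((1 / c) * v * c) := by rw [← Real.sqrt_mul (by positivity)]
    _ = Real.sqrt v := by congr 1; field_simp
    _ = 1 * Real.sqrt v := by rw [one_mul]
end
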